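/- arXiv:2007.00118 — 2 statements merged into one kernel-verified Lean document; each statement's English description precedes it below -/
import Mathlib

section
/- Let f : [0,1) → ℝ, d ≥ 1 and 1 ≤ ν ≤ d. Then the span of the partial evaluations of the level-d tensorization, T_{b,d−ν}^{−1}(span{(T_{b,d}f)(j_1,...,j_ν,·) : (j_1,...,j_ν) ∈ {0,...,b-1}^ν}), equals span{(T_{b,ν}f)(j_1,...,j_ν,·) : (j_1,...,j_ν) ∈ {0,...,b-1}^ν} = span{f(b^{−ν}(j+·)) : 0 ≤ j ≤ b^ν − 1}. Consequently the ν-th rank r_{ν,d}(f) := dim span{(T_{b,d}f)(j_β,·)} is independent of d ≥ ν: r_{ν,d}(f) = r_{ν,ν}(f) = dim span{f(b^{−ν}(j+·)) : 0 ≤ j ≤ b^ν − 1}. -/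
/-- The conversion map `t_{b,d}(i_1,...,i_d,y) = ∑_{k=1}^d i_k b^{-k} + b^{-d} y`. -/
noncomputable def convMap (b d : ℕ) (i : ℕ → ℕ) (y : ℝ) : ℝ :=
  (∑ k ∈ Finset.range d, (i k : ℝ) / (b : ℝ) ^ (k + 1)) + y / (b : ℝ) ^ d

/-- Tensorization at level `m`: `(T_{b,m} g)(i,y) = g(t_{b,m}(i,y))`. -/
noncomputable def Tmap (b m : ℕ) (g : ℝ → ℝ) : (ℕ → ℕ) × ℝ → ℝ :=
  fun p => g (convMap b m p.1 p.2)

/-- Partial evaluation of `T_{b,d} f` fixing the first `ν` digits to `i`. -/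
noncomputable def partialEval (b d ν : ℕ) (f : ℝ → ℝ) (i : ℕ → ℕ) : (ℕ → ℕ) × ℝ → ℝ :=
  fun p => f (convMap b d (fun k => if k < ν then i k else p.1 (k - ν)) p.2)

/-!
The conversion maps compose: `t_{b,ν+m}(i ++ j, y) = t_{b,ν}(i, t_{b,m}(j, y))`. Hence each partial
evaluation of `T_{b,d} f` is `T_{b,d-ν}` applied to `f(t_{b,ν}(i, ·))`, and `T_{b,d-ν}` is an injective
linear map since `t_{b,d-ν}` is onto, so it preserves spans and their dimensions. Finally
`t_{b,ν}(i, y) = (j + y) / b^ν` with `j` the number whose base-`b` digits are `i_1 … i_ν`, and these `j`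
are exactly `0, …, b^ν - 1`.
-/

open Finset

/-- The natural number with base-`b` digits `i 0, …, i (ν - 1)`, most significant first. -/
def digitValue (b ν : ℕ) (i : ℕ → ℕ) : ℕ :=
  ∑ k ∈ range ν, i k * b ^ (ν - 1 - k)

lemma digitValue_eq_finFunctionFinEquiv {b ν : ℕ} {i : ℕ → ℕ} (hi : ∀ k < ν, i k < b) :
    digitValue b ν i =
      finFunctionFinEquiv (fun l : Fin ν => (⟨i (Fin.rev l), hi _ (Fin.rev l).isLt⟩ : Fin b)) := by
  rw [finFunctionFinEquiv_apply, digitValue,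
    ← Fin.sum_univ_eq_sum_range (fun k => i k * b ^ (ν - 1 - k)), ← Equiv.sum_comp Fin.revPerm]
  refine Fintype.sum_congr _ _ fun l => ?_
  simp only [Fin.revPerm_apply, Fin.val_rev]
  congr 2
  omega

lemma exists_digitValue_eq_iff {b ν j : ℕ} :
    (∃ i : ℕ → ℕ, (∀ k < ν, i k < b) ∧ digitValue b ν i = j) ↔ j < b ^ ν := by
  constructor
  · rintro ⟨i, hi, rfl⟩
    rw [digitValue_eq_finFunctionFinEquiv hi]
    exact Fin.isLt _
  · intro hj
    set a := finFunctionFinEquiv.symm (⟨j, hj⟩ : Fin (b ^ ν))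
    let i : ℕ → ℕ := fun k => if h : k < ν then a (Fin.rev ⟨k, h⟩) else 0
    have hi : ∀ k < ν, i k < b := fun k hk => by simp only [i, dif_pos hk]; exact Fin.isLt _
    refine ⟨i, hi, ?_⟩
    have hdigits : (fun l : Fin ν => (⟨i (Fin.rev l), hi _ (Fin.rev l).isLt⟩ : Fin b)) = a := by
      funext l
      simp only [i, dif_pos (Fin.rev l).isLt, Fin.eta, Fin.rev_rev]
    rw [digitValue_eq_finFunctionFinEquiv hi, hdigits, Equiv.apply_symm_apply]

lemma convMap_eq_digitValue {b : ℕ} (hb : b ≠ 0) (ν : ℕ) (i : ℕ → ℕ) (y : ℝ) :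
    convMap b ν i y = (digitValue b ν i + y) / (b : ℝ) ^ ν := by
  have hb' : (b : ℝ) ≠ 0 := Nat.cast_ne_zero.mpr hb
  rw [convMap, digitValue, add_div, Nat.cast_sum, sum_div]
  congr 1
  refine sum_congr rfl fun k hk => ?_
  have hk : k + 1 + (ν - 1 - k) = ν := by rw [mem_range] at hk; omega
  rw [div_eq_div_iff (pow_ne_zero _ hb') (pow_ne_zero _ hb'), Nat.cast_mul, Nat.cast_pow, mul_assoc,
    ← pow_add, add_comm (ν - 1 - k), hk]

lemma convMap_append (b ν m : ℕ) (i j : ℕ → ℕ) (y : ℝ) :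
    convMap b (ν + m) (fun k => if k < ν then i k else j (k - ν)) y
      = convMap b ν i (convMap b m j y) := by
  simp only [convMap, sum_range_add, add_div, sum_div, div_div, ← pow_add, add_assoc]
  congr 1
  · exact sum_congr rfl fun k hk => by rw [if_pos (mem_range.mp hk)]
  · congr 1
    · refine sum_congr rfl fun l _ => ?_
      rw [if_neg (by omega), Nat.add_sub_cancel_left]
      ring_nf
    · rw [add_comm m]

lemma partialEval_eq_Tmap {b d ν : ℕ} (hνd : ν ≤ d) (f : ℝ → ℝ) (i : ℕ → ℕ) :
    partialEval b d ν f i = Tmap b (d - ν) (fun y => f (convMap b ν i y)) := by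
  obtain ⟨m, rfl⟩ := Nat.exists_eq_add_of_le hνd
  funext p
  simp only [partialEval, Tmap, Nat.add_sub_cancel_left, convMap_append]

noncomputable def tmapLinear (b m : ℕ) : (ℝ → ℝ) →ₗ[ℝ] ((ℕ → ℕ) × ℝ → ℝ) :=
  LinearMap.funLeft ℝ ℝ fun p => convMap b m p.1 p.2

lemma tmapLinear_apply (b m : ℕ) (g : ℝ → ℝ) : tmapLinear b m g = Tmap b m g := rfl

lemma tmapLinear_injective {b : ℕ} (hb : b ≠ 0) (m : ℕ) : Function.Injective (tmapLinear b m) := by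
  refine LinearMap.funLeft_injective_of_surjective ℝ ℝ _ fun t => ⟨(fun _ => 0, t * (b : ℝ) ^ m), ?_⟩
  have : (b : ℝ) ^ m ≠ 0 := pow_ne_zero _ (Nat.cast_ne_zero.mpr hb)
  simp [convMap, this]

lemma partialEvals_eq_image {b d ν : ℕ} (hνd : ν ≤ d) (f : ℝ → ℝ) :
    {F : (ℕ → ℕ) × ℝ → ℝ | ∃ i : ℕ → ℕ, (∀ k < ν, i k < b) ∧ F = partialEval b d ν f i}
      = tmapLinear b (d - ν) ''
          {h : ℝ → ℝ | ∃ i : ℕ → ℕ, (∀ k < ν, i k < b) ∧ h = fun y => f (convMap b ν i y)} := by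
  ext F
  simp only [Set.mem_ofPred_eq, Set.mem_image, tmapLinear_apply, partialEval_eq_Tmap hνd]
  constructor
  · rintro ⟨i, hi, rfl⟩
    exact ⟨_, ⟨i, hi, rfl⟩, rfl⟩
  · rintro ⟨_, ⟨i, hi, rfl⟩, rfl⟩
    exact ⟨i, hi, rfl⟩

lemma digitSet_eq_shiftSet {b : ℕ} (hb : b ≠ 0) (ν : ℕ) (f : ℝ → ℝ) :
    {h : ℝ → ℝ | ∃ i : ℕ → ℕ, (∀ k < ν, i k < b) ∧ h = fun y => f (convMap b ν i y)}
      = {h : ℝ → ℝ | ∃ j : ℕ, j < b ^ ν ∧ h = fun y => f (((j : ℝ) + y) / (b : ℝ) ^ ν)} := by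
  ext h
  simp only [Set.mem_ofPred_eq, convMap_eq_digitValue hb, ← exists_digitValue_eq_iff]
  constructor
  · rintro ⟨i, hi, rfl⟩
    exact ⟨_, ⟨i, hi, rfl⟩, rfl⟩
  · rintro ⟨_, ⟨i, hi, rfl⟩, rfl⟩
    exact ⟨i, hi, rfl⟩

theorem stmt12_general (b d ν : ℕ) (hb : 2 ≤ b) (hνd : ν ≤ d) (f : ℝ → ℝ) :
    (∀ g : ℝ → ℝ,
      Tmap b (d - ν) g ∈ Submodule.span ℝ
          {F : (ℕ → ℕ) × ℝ → ℝ | ∃ i : ℕ → ℕ, (∀ k < ν, i k < b) ∧ F = partialEval b d ν f i}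
        ↔ g ∈ Submodule.span ℝ
          {h : ℝ → ℝ | ∃ i : ℕ → ℕ, (∀ k < ν, i k < b) ∧ h = fun y => f (convMap b ν i y)}) ∧
    Submodule.span ℝ
        {h : ℝ → ℝ | ∃ i : ℕ → ℕ, (∀ k < ν, i k < b) ∧ h = fun y => f (convMap b ν i y)}
      = Submodule.span ℝ
        {h : ℝ → ℝ | ∃ j : ℕ, j < b ^ ν ∧ h = fun y => f (((j : ℝ) + y) / (b : ℝ) ^ ν)} ∧
    Module.finrank ℝ (Submodule.span ℝ
        {F : (ℕ → ℕ) × ℝ → ℝ | ∃ i : ℕ → ℕ, (∀ k < ν, i k < b) ∧ F = partialEval b d ν f i})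
      = Module.finrank ℝ (Submodule.span ℝ
        {h : ℝ → ℝ | ∃ j : ℕ, j < b ^ ν ∧ h = fun y => f (((j : ℝ) + y) / (b : ℝ) ^ ν)}) := by
  have hb0 : b ≠ 0 := by omega
  have hT := tmapLinear_injective hb0 (d - ν)
  rw [partialEvals_eq_image hνd, ← digitSet_eq_shiftSet hb0]
  refine ⟨fun g => ?_, rfl, ?_⟩
  · rw [← tmapLinear_apply]
    exact Submodule.apply_mem_span_image_iff_mem_span hT
  · rw [Submodule.span_image]
    exact (Submodule.equivMapOfInjective _ hT _).finrank_eq.symm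

/-- `T_{b,d−ν}^{−1}(span of the partial evaluations of T_{b,d}f)` equals
`span{(T_{b,ν}f)(j,·)} = span{f(b^{−ν}(j+·)) : 0 ≤ j < b^ν}`; consequently the rank
`r_{ν,d}(f)` is independent of `d ≥ ν`. -/
theorem stmt12 (b d ν : ℕ) (hb : 2 ≤ b) (hν : 1 ≤ ν) (hνd : ν ≤ d) (f : ℝ → ℝ) :
    (∀ g : ℝ → ℝ,
      Tmap b (d - ν) g ∈ Submodule.span ℝ
          {F : (ℕ → ℕ) × ℝ → ℝ | ∃ i : ℕ → ℕ, (∀ k < ν, i k < b) ∧ F = partialEval b d ν f i}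
        ↔ g ∈ Submodule.span ℝ
          {h : ℝ → ℝ | ∃ i : ℕ → ℕ, (∀ k < ν, i k < b) ∧ h = fun y => f (convMap b ν i y)}) ∧
    Submodule.span ℝ
        {h : ℝ → ℝ | ∃ i : ℕ → ℕ, (∀ k < ν, i k < b) ∧ h = fun y => f (convMap b ν i y)}
      = Submodule.span ℝ
        {h : ℝ → ℝ | ∃ j : ℕ, j < b ^ ν ∧ h = fun y => f (((j : ℝ) + y) / (b : ℝ) ^ ν)} ∧
    Module.finrank ℝ (Submodule.span ℝ
        {F : (ℕ → ℕ) × ℝ → ℝ | ∃ i : ℕ → ℕ, (∀ k < ν, i k < b) ∧ F = partialEval b d ν f i})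
      = Module.finrank ℝ (Submodule.span ℝ
        {h : ℝ → ℝ | ∃ j : ℕ, j < b ^ ν ∧ h = fun y => f (((j : ℝ) + y) / (b : ℝ) ^ ν)}) :=
  stmt12_general b d ν hb hνd f
end

section
/- The ranks of a tensorized function satisfy the admissibility conditions: for any f : [0,1) → ℝ, d ≥ 1 and 1 ≤ ν ≤ d − 1, r_{ν+1}(f) ≤ b·r_ν(f) and r_ν(f) ≤ b·r_{ν+1}(f), where r_ν(f) := dim span{f(b^{−ν}(j+·)) : 0 ≤ j ≤ b^ν − 1}. -/
/-!
Write `φ_{ν,j}(y) = f ((j + y) / b^ν)`. For `j = b q + k` with `k < b` one has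
`φ_{ν+1,j} = φ_{ν,q} ∘ (y ↦ (k + y) / b)`, so the span at level `ν + 1` lies in the sum of the `b`
images of the span at level `ν` under these affine substitutions, giving `r_{ν+1} ≤ b r_ν`.
Conversely `φ_{ν,j} = φ_{ν+1,b j} ∘ (y ↦ b y)`, so the span at level `ν` is an image of the span
at level `ν + 1`, and `r_ν ≤ r_{ν+1} ≤ b r_{ν+1}`.
-/

open Submodule Module

/-- The `ν`-th rank of `f`: the dimension of the span of the `b^ν` pieces of `f` on the
`b`-adic intervals of level `ν`, rescaled to `[0,1)`. -/
noncomputable def rnk (b ν : ℕ) (f : ℝ → ℝ) : ℕ :=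
  Module.finrank ℝ (Submodule.span ℝ
    {h : ℝ → ℝ | ∃ j : ℕ, j < b ^ ν ∧ h = fun y => f (((j : ℝ) + y) / (b : ℝ) ^ ν)})

theorem Submodule.finrank_finset_sup_le {K V ι : Type*} [DivisionRing K] [AddCommGroup V]
    [Module K V] (s : Finset ι) (p : ι → Submodule K V) [∀ i, FiniteDimensional K (p i)] :
    finrank K ↥(s.sup p) ≤ ∑ i ∈ s, finrank K (p i) := by
  classical
  induction s using Finset.induction with
  | empty => simp
  | insert a s ha ih =>
    rw [Finset.sup_insert, Finset.sum_insert ha]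
    exact (finrank_add_le_finrank_add_finrank _ _).trans (Nat.add_le_add_left ih _)

namespace Tensorization

variable (b ν : ℕ) (f : ℝ → ℝ)

noncomputable def piece (j : ℕ) : ℝ → ℝ := fun y => f ((j + y) / (b : ℝ) ^ ν)

def pieceSpan : Submodule ℝ (ℝ → ℝ) := span ℝ (piece b ν f '' Set.Iio (b ^ ν))

instance : FiniteDimensional ℝ (pieceSpan b ν f) :=
  FiniteDimensional.span_of_finite ℝ ((Set.finite_Iio _).image _)

theorem rnk_eq_finrank_pieceSpan : rnk b ν f = finrank ℝ (pieceSpan b ν f) := by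
  have hset : {h | ∃ j, j < b ^ ν ∧ h = piece b ν f j} = piece b ν f '' Set.Iio (b ^ ν) := by
    ext h
    simp [eq_comm]
  rw [pieceSpan, ← hset]
  rfl

variable {b ν f}

theorem piece_succ_mul_add (hb : b ≠ 0) (q k : ℕ) :
    piece b (ν + 1) f (b * q + k) = piece b ν f q ∘ fun y : ℝ => (k + y) / b := by
  ext y
  simp only [piece, Function.comp_apply]
  congr 1
  push_cast
  field_simp
  ring

theorem piece_eq_piece_succ_comp (hb : b ≠ 0) (j : ℕ) :
    piece b ν f j = piece b (ν + 1) f (b * j) ∘ fun y : ℝ => b * y := by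
  ext y
  simp only [piece, Function.comp_apply]
  congr 1
  push_cast
  field_simp
  ring

theorem pieceSpan_succ_le (hb : 0 < b) :
    pieceSpan b (ν + 1) f ≤ (Finset.range b).sup fun k =>
      (pieceSpan b ν f).map (LinearMap.funLeft ℝ ℝ fun y : ℝ => (k + y) / b) := by
  rw [pieceSpan, span_le]
  rintro _ ⟨j, hj, rfl⟩
  have hq : j / b < b ^ ν := by
    rw [Set.mem_Iio, pow_succ] at hj
    exact Nat.div_lt_of_lt_mul (mul_comm b _ ▸ hj)
  refine (Finset.le_sup (f := fun k : ℕ => (pieceSpan b ν f).map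
    (LinearMap.funLeft ℝ ℝ fun y : ℝ => (k + y) / b)) (Finset.mem_range.mpr (Nat.mod_lt j hb)))
    ⟨piece b ν f (j / b), subset_span ⟨_, hq, rfl⟩, ?_⟩
  have h := piece_succ_mul_add (f := f) (ν := ν) hb.ne' (j / b) (j % b)
  rw [Nat.div_add_mod] at h
  exact h.symm

theorem pieceSpan_le_map_pieceSpan_succ (hb : b ≠ 0) :
    pieceSpan b ν f ≤ (pieceSpan b (ν + 1) f).map (LinearMap.funLeft ℝ ℝ fun y : ℝ => b * y) := by
  rw [pieceSpan, span_le]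
  rintro _ ⟨j, hj, rfl⟩
  have hbj : b * j < b ^ (ν + 1) := by
    rw [pow_succ']
    exact Nat.mul_lt_mul_of_pos_left hj (Nat.pos_of_ne_zero hb)
  refine ⟨piece b (ν + 1) f (b * j), subset_span ⟨_, hbj, rfl⟩, ?_⟩
  exact (piece_eq_piece_succ_comp hb j).symm

theorem rnk_succ_le_mul_rnk (hb : 0 < b) : rnk b (ν + 1) f ≤ b * rnk b ν f := by
  simp only [rnk_eq_finrank_pieceSpan]
  calc finrank ℝ (pieceSpan b (ν + 1) f)
      ≤ finrank ℝ ↥((Finset.range b).sup fun k : ℕ =>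
          (pieceSpan b ν f).map (LinearMap.funLeft ℝ ℝ fun y : ℝ => (k + y) / b)) :=
        finrank_mono (pieceSpan_succ_le hb)
    _ ≤ ∑ k ∈ Finset.range b, finrank ℝ
          ((pieceSpan b ν f).map (LinearMap.funLeft ℝ ℝ fun y : ℝ => (k + y) / b)) :=
        finrank_finset_sup_le _ _
    _ ≤ ∑ _k ∈ Finset.range b, finrank ℝ (pieceSpan b ν f) :=
        Finset.sum_le_sum fun _ _ => finrank_map_le _ _
    _ = b * finrank ℝ (pieceSpan b ν f) := by simp

theorem rnk_le_rnk_succ (hb : b ≠ 0) : rnk b ν f ≤ rnk b (ν + 1) f := by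
  simp only [rnk_eq_finrank_pieceSpan]
  exact (finrank_mono (pieceSpan_le_map_pieceSpan_succ hb)).trans (finrank_map_le _ _)

end Tensorization

open Tensorization in
theorem stmt16_general (b ν : ℕ) (hb : 2 ≤ b) (f : ℝ → ℝ) :
    rnk b (ν + 1) f ≤ b * rnk b ν f ∧ rnk b ν f ≤ b * rnk b (ν + 1) f :=
  ⟨rnk_succ_le_mul_rnk (by omega),
    (rnk_le_rnk_succ (by omega)).trans (Nat.le_mul_of_pos_left _ (by omega))⟩

/-- Ranks admissibility conditions: for `1 ≤ ν ≤ d − 1`,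
`r_{ν+1}(f) ≤ b·r_ν(f)` and `r_ν(f) ≤ b·r_{ν+1}(f)`. -/
theorem stmt16 (b d ν : ℕ) (hb : 2 ≤ b) (hd : 1 ≤ d) (hν : 1 ≤ ν) (hνd : ν ≤ d - 1)
    (f : ℝ → ℝ) :
    rnk b (ν + 1) f ≤ b * rnk b ν f ∧ rnk b ν f ≤ b * rnk b (ν + 1) f :=
  stmt16_general b ν hb f
end
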